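/- The join operation on topological spaces is associative up to homeomorphism for compact Hausdorff spaces: (X * Y) * Z is homeomorphic to X * (Y * Z). -/

import Mathlib

/-!
Both iterated joins are quotients of `(X × Y × I) × Z × I`. For `(X * Y) * Z` the quotient map is
the obvious one; for `X * (Y * Z)` it sends `((x, y, s), z, t)` to `[x, [y, z, τ], σ]` with
`1 - σ = (1 - s)(1 - t)` and `σ τ = t`, so that in both joins `x`, `y`, `z` carry the barycentric
weights `(1 - s)(1 - t)`, `s (1 - t)`, `t`. A point of a join is determined by its parameter and by
the coordinates of nonzero weight, so the two maps have the same fibres. Both are continuous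
surjections from a compact space onto a Hausdorff one, hence quotient maps, and quotient maps with
the same fibres have homeomorphic targets. Continuity of the second map at `σ = 0`, where `τ`
jumps, comes from the tube lemma for the compact space `Y * Z`, which collapses there.
-/

open unitInterval Topology

/-- The join relation on `X × Y × [0,1]`: identify `(x, y, 0) ~ (x, y', 0)` and
`(x, y, 1) ~ (x', y, 1)`. -/
def JoinRel (X Y : Type*) : X × Y × I → X × Y × I → Prop := fun p q =>
  (p.2.2 = 0 ∧ q.2.2 = 0 ∧ p.1 = q.1) ∨ (p.2.2 = 1 ∧ q.2.2 = 1 ∧ p.2.1 = q.2.1)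

/-- The topological join `X * Y`. -/
def TopJoin (X Y : Type*) : Type _ := Quot (JoinRel X Y)

instance (X Y : Type*) [TopologicalSpace X] [TopologicalSpace Y] :
    TopologicalSpace (TopJoin X Y) :=
  inferInstanceAs (TopologicalSpace (Quot _))

open Set Function

theorem Topology.IsQuotientMap.nonempty_homeomorph_of_ker_eq {A B C : Type*}
    [TopologicalSpace A] [TopologicalSpace B] [TopologicalSpace C] {f : A → B} {g : A → C}
    (hf : IsQuotientMap f) (hg : IsQuotientMap g) (h : Setoid.ker f = Setoid.ker g) :
    Nonempty (B ≃ₜ C) := by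
  let F : C(A, B) := ⟨f, hf.continuous⟩
  let G : C(A, C) := ⟨g, hg.continuous⟩
  obtain ⟨e⟩ : Nonempty (Quotient (Setoid.ker F) ≃ₜ C) := h ▸ ⟨hg.homeomorph (f := G)⟩
  exact ⟨(hf.homeomorph (f := F)).symm.trans e⟩

theorem IsClosedMap.t2Space {A B : Type*} [TopologicalSpace A] [TopologicalSpace B]
    [NormalSpace A] {π : A → B} (hπ : IsClosedMap π) (hsurj : Surjective π)
    (hfib : ∀ b, IsClosed (π ⁻¹' {b})) : T2Space B := by
  refine ⟨fun b b' hne => ?_⟩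
  obtain ⟨U, V, hU, hV, hbU, hb'V, hUV⟩ :=
    normal_separation (hfib b) (hfib b') ((disjoint_singleton.2 hne).preimage π)
  refine ⟨(π '' Uᶜ)ᶜ, (π '' Vᶜ)ᶜ, (hπ _ hU.isClosed_compl).isOpen_compl,
    (hπ _ hV.isClosed_compl).isOpen_compl, ?_, ?_, ?_⟩
  · rintro ⟨a, ha, rfl⟩
    exact ha (hbU rfl)
  · rintro ⟨a, ha, rfl⟩
    exact ha (hb'V rfl)
  · rw [disjoint_iff_inter_eq_empty, ← compl_union, ← image_union, ← compl_inter,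
      hUV.inter_eq, compl_empty, image_univ, hsurj.range_eq, compl_univ]

section CompactQuot

variable {A : Type*} [TopologicalSpace A] [CompactSpace A] [T2Space A] {r : A → A → Prop}

theorem isClosedMap_quot_mk (h : IsClosed {p : A × A | Quot.mk r p.1 = Quot.mk r p.2}) :
    IsClosedMap (Quot.mk r) := by
  intro C hC
  rw [← isQuotientMap_quot_mk.isClosed_preimage]
  have hsat : Quot.mk r ⁻¹' (Quot.mk r '' C) =
      Prod.fst '' ({p : A × A | Quot.mk r p.1 = Quot.mk r p.2} ∩ univ ×ˢ C) := by
    ext a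
    simp [eq_comm, and_comm]
  rw [hsat]
  exact ((h.inter (isClosed_univ.prod hC)).isCompact.image continuous_fst).isClosed

theorem t2Space_quot (h : IsClosed {p : A × A | Quot.mk r p.1 = Quot.mk r p.2}) :
    T2Space (Quot r) := by
  refine (isClosedMap_quot_mk h).t2Space Quot.mk_surjective fun b => ?_
  obtain ⟨a, rfl⟩ := Quot.mk_surjective b
  exact h.preimage (by fun_prop : Continuous fun c : A => (c, a))

end CompactQuot

namespace TopJoin

section Join

variable {X Y : Type*}

def mk : X × Y × I → TopJoin X Y := Quot.mk _

theorem mk_surjective : Surjective (mk : X × Y × I → TopJoin X Y) := Quot.mk_surjective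

theorem mk_eq_mk_iff {p q : X × Y × I} :
    mk p = mk q ↔ p.2.2 = q.2.2 ∧ (p.2.2 ≠ 1 → p.1 = q.1) ∧ (p.2.2 ≠ 0 → p.2.1 = q.2.1) := by
  constructor
  · intro h
    have hequiv : Equivalence fun p q : X × Y × I =>
        p.2.2 = q.2.2 ∧ (p.2.2 ≠ 1 → p.1 = q.1) ∧ (p.2.2 ≠ 0 → p.2.1 = q.2.1) :=
      ⟨fun _ => ⟨rfl, fun _ => rfl, fun _ => rfl⟩, by grind, by grind⟩
    refine hequiv.eqvGen_iff.1 (Relation.EqvGen.mono (fun p q hpq => ?_) _ _ (Quot.eqvGen_exact h))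
    rcases hpq with ⟨hp, hq, hx⟩ | ⟨hp, hq, hy⟩ <;> simp_all
  · obtain ⟨x, y, t⟩ := p
    obtain ⟨x', y', t'⟩ := q
    rintro ⟨ht, hx, hy⟩
    dsimp only at ht hx hy
    subst ht
    by_cases h0 : t = 0
    · exact Quot.sound (Or.inl ⟨h0, h0, hx (h0 ▸ zero_ne_one)⟩)
    by_cases h1 : t = 1
    · exact Quot.sound (Or.inr ⟨h1, h1, hy (h1 ▸ one_ne_zero)⟩)
    rw [hx h1, hy h0]

variable [TopologicalSpace X] [TopologicalSpace Y]

@[fun_prop]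
theorem continuous_mk : Continuous fun p : X × Y × I => (mk p : TopJoin X Y) := continuous_quot_mk

instance [CompactSpace X] [CompactSpace Y] : CompactSpace (TopJoin X Y) := Quot.compactSpace

theorem isClosed_setOf_mk_eq_mk [T2Space X] [T2Space Y] :
    IsClosed {p : (X × Y × I) × (X × Y × I) | mk p.1 = mk p.2} := by
  simp only [mk_eq_mk_iff, ne_eq, imp_iff_not_or, not_not, ofPred_and, ofPred_or]
  apply_rules [IsClosed.inter, IsClosed.union, isClosed_eq] <;> fun_prop

instance [CompactSpace X] [T2Space X] [CompactSpace Y] [T2Space Y] : T2Space (TopJoin X Y) :=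
  t2Space_quot isClosed_setOf_mk_eq_mk

theorem continuousAt_mk_of_eq_zero [CompactSpace Y] {W : Type*} [TopologicalSpace W]
    {f : W → X} {g : W → Y} {h : W → I} {w : W} (hf : ContinuousAt f w) (hh : ContinuousAt h w)
    (h0 : h w = 0) : ContinuousAt (fun w => mk (f w, g w, h w)) w := by
  intro U hU
  have hU' : ∀ y ∈ (univ : Set Y), ∀ᶠ q : (X × I) × Y in 𝓝 ((f w, 0), y),
      mk (q.1.1, q.2, q.1.2) ∈ U := by
    intro y _
    have hy : mk (f w, y, 0) = mk (f w, g w, h w) :=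
      mk_eq_mk_iff.2 ⟨h0.symm, fun _ => rfl, by simp⟩
    exact (by fun_prop : Continuous fun q : (X × I) × Y => mk (q.1.1, q.2, q.1.2)).continuousAt
      (by simpa [hy] using hU)
  have hnear := isCompact_univ.eventually_forall_of_forall_eventually
    (P := fun (a : X × I) y => mk (a.1, y, a.2) ∈ U) hU'
  rw [← h0] at hnear
  exact ((hf.prodMk_nhds hh).eventually hnear).mono fun w hw => hw (g w) trivial

end Join

section Parameters

def assocOuter (s t : I) : I :=
  ⟨s + t - s * t, by nlinarith [nonneg s, le_one s, nonneg t, le_one t],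
    by nlinarith [nonneg s, le_one s, nonneg t, le_one t]⟩

-- At `s = t = 0` this is `0 / 0 = 0`; there the inner coordinate is collapsed anyway.
noncomputable def assocInner (s t : I) : I :=
  ⟨t / assocOuter s t, div_mem (nonneg t) (nonneg _)
    (by simp only [assocOuter]; nlinarith [nonneg s, le_one t])⟩

variable {s t : I}

theorem coe_assocOuter (s t : I) : (assocOuter s t : ℝ) = s + t - s * t := rfl

theorem coe_assocInner (s t : I) : (assocInner s t : ℝ) = t / assocOuter s t := rfl

@[fun_prop]
theorem continuous_assocOuter : Continuous fun p : I × I => assocOuter p.1 p.2 :=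
  Continuous.subtype_mk (by fun_prop) _

theorem assocOuter_eq_zero_iff : assocOuter s t = 0 ↔ s = 0 ∧ t = 0 := by
  simp only [← Icc.coe_eq_zero, coe_assocOuter]
  constructor
  · intro h
    constructor <;> nlinarith [nonneg s, le_one s, nonneg t, le_one t]
  · rintro ⟨hs, ht⟩
    simp [hs, ht]

theorem assocOuter_ne_zero_iff : assocOuter s t ≠ 0 ↔ s ≠ 0 ∨ t ≠ 0 := by
  rw [Ne, assocOuter_eq_zero_iff, not_and_or]

theorem assocOuter_eq_one_iff : assocOuter s t = 1 ↔ s = 1 ∨ t = 1 := by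
  simp only [← Icc.coe_eq_one, coe_assocOuter]
  constructor
  · intro h
    have : (1 - (s : ℝ)) * (1 - t) = 0 := by linarith
    rcases mul_eq_zero.1 this with h | h
    · exact Or.inl (by linarith)
    · exact Or.inr (by linarith)
  · rintro (h | h) <;> simp [h]

theorem assocOuter_left_injective (ht : t ≠ 1) : Injective fun s => assocOuter s t := by
  intro s s' h
  have h1 : (1 - t : ℝ) ≠ 0 := sub_ne_zero.2 (Ne.symm (coe_ne_one.2 ht))
  have : (s : ℝ) * (1 - t) = s' * (1 - t) := by
    have := congrArg Subtype.val h
    simp only [coe_assocOuter] at this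
    linarith
  exact Subtype.ext (mul_right_cancel₀ h1 this)

theorem assocInner_mul_assocOuter (s t : I) : (assocInner s t : ℝ) * assocOuter s t = t := by
  by_cases h : assocOuter s t = 0
  · rw [(assocOuter_eq_zero_iff.1 h).2, Icc.coe_zero, mul_eq_zero]
    exact Or.inr (by rw [← (assocOuter_eq_zero_iff.1 h).2, h, Icc.coe_zero])
  · exact div_mul_cancel₀ _ (coe_ne_zero.2 h)

theorem assocInner_eq_zero_iff : assocInner s t = 0 ↔ t = 0 := by
  refine ⟨fun h => ?_, fun h => by simp [← Icc.coe_eq_zero, coe_assocInner, h]⟩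
  simpa [h, eq_comm, ← Icc.coe_eq_zero] using assocInner_mul_assocOuter s t

theorem assocInner_eq_one_iff (h : assocOuter s t ≠ 0) : assocInner s t = 1 ↔ s = 0 ∨ t = 1 := by
  rw [← Icc.coe_eq_one, coe_assocInner, div_eq_one_iff_eq (coe_ne_zero.2 h), coe_assocOuter,
    ← Icc.coe_eq_zero, ← Icc.coe_eq_one]
  constructor
  · intro h
    have : (s : ℝ) * (1 - t) = 0 := by linarith
    rcases mul_eq_zero.1 this with h | h
    · exact Or.inl h
    · exact Or.inr (by linarith)
  · rintro (h | h) <;> simp [h]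

theorem assocOuter_one_right (s : I) : assocOuter s 1 = 1 := assocOuter_eq_one_iff.2 (Or.inr rfl)

theorem assocInner_one_right (s : I) : assocInner s 1 = 1 :=
  (assocInner_eq_one_iff (by rw [assocOuter_one_right]; exact one_ne_zero)).2 (Or.inr rfl)

theorem exists_assocOuter_assocInner (a b : I) :
    ∃ s t, assocOuter s t = a ∧ (a ≠ 0 → assocInner s t = b) := by
  by_cases hab : a = 1 ∧ b = 1
  · obtain ⟨rfl, rfl⟩ := hab
    exact ⟨1, 1, assocOuter_one_right 1, fun _ => assocInner_one_right 1⟩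
  have hden : (a * b : ℝ) < 1 := by
    rw [← Icc.coe_eq_one, ← Icc.coe_eq_one] at hab
    by_contra! h
    exact hab ⟨by nlinarith [le_one a, le_one b, nonneg a],
      by nlinarith [le_one a, le_one b, nonneg b]⟩
  set s : I := ⟨a * (1 - b) / (1 - a * b), div_mem (mul_nonneg (nonneg a) (by linarith [le_one b]))
    (by linarith) (by nlinarith [le_one a, nonneg b])⟩
  have houter : assocOuter s (a * b) = a := by
    apply Subtype.ext
    rw [coe_assocOuter, Icc.coe_mul]
    have : (1 - a * b : ℝ) ≠ 0 := (sub_pos.2 hden).ne'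
    simp only [s]
    field_simp
    ring
  refine ⟨s, a * b, houter, fun ha => Subtype.ext ?_⟩
  rw [coe_assocInner, houter, Icc.coe_mul, mul_div_cancel_left₀ _ (coe_ne_zero.2 ha)]

end Parameters

section Assoc

variable {X Y Z : Type*}

def leftAssocMk : (X × Y × I) × Z × I → TopJoin (TopJoin X Y) Z :=
  mk ∘ Prod.map mk id

noncomputable def rightAssocMk (p : (X × Y × I) × Z × I) : TopJoin X (TopJoin Y Z) :=
  mk (p.1.1, mk (p.1.2.1, p.2.1, assocInner p.1.2.2 p.2.2), assocOuter p.1.2.2 p.2.2)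

theorem leftAssocMk_surjective : Surjective (leftAssocMk : _ → TopJoin (TopJoin X Y) Z) :=
  mk_surjective.comp (mk_surjective.prodMap surjective_id)

theorem rightAssocMk_surjective : Surjective (rightAssocMk : _ → TopJoin X (TopJoin Y Z)) := by
  intro w
  obtain ⟨⟨x, v, a⟩, rfl⟩ := mk_surjective w
  obtain ⟨⟨y, z, b⟩, rfl⟩ := mk_surjective v
  obtain ⟨s, t, hout, hin⟩ := exists_assocOuter_assocInner a b
  refine ⟨((x, y, s), z, t), mk_eq_mk_iff.2 ⟨hout, fun _ => rfl, fun h0 => ?_⟩⟩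
  rw [hin (hout ▸ h0)]

theorem rightAssocMk_eq_iff {p q : (X × Y × I) × Z × I} :
    rightAssocMk p = rightAssocMk q ↔ leftAssocMk p = leftAssocMk q := by
  obtain ⟨⟨x, y, s⟩, z, t⟩ := p
  obtain ⟨⟨x', y', s'⟩, z', t'⟩ := q
  simp only [rightAssocMk, leftAssocMk, comp_apply, Prod.map, id, mk_eq_mk_iff]
  constructor
  · rintro ⟨hout, hx, hin⟩
    obtain rfl : t = t' := by
      by_cases h0 : assocOuter s t = 0
      · rw [(assocOuter_eq_zero_iff.1 h0).2, (assocOuter_eq_zero_iff.1 (hout.symm.trans h0)).2]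
      · apply Subtype.ext
        rw [← assocInner_mul_assocOuter s t, ← assocInner_mul_assocOuter s' t', (hin h0).1, hout]
    refine ⟨rfl, fun ht => ?_, fun ht => ?_⟩
    · obtain rfl : s = s' := assocOuter_left_injective ht hout
      refine ⟨rfl, fun hs => hx ?_, fun hs => ?_⟩
      · rw [Ne, assocOuter_eq_one_iff]
        tauto
      · have h0 : assocOuter s t ≠ 0 := assocOuter_ne_zero_iff.2 (Or.inl hs)
        exact (hin h0).2.1 (by rw [Ne, assocInner_eq_one_iff h0]; tauto)
    · have h0 : assocOuter s t ≠ 0 := assocOuter_ne_zero_iff.2 (Or.inr ht)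
      exact (hin h0).2.2 (by rwa [Ne, assocInner_eq_zero_iff])
  · rintro ⟨rfl, hst, hz⟩
    by_cases ht : t = 1
    · subst ht
      simp [assocOuter_one_right, assocInner_one_right, hz]
    obtain ⟨rfl, hx, hy⟩ := hst ht
    exact ⟨rfl, fun h1 => hx fun hs => h1 (assocOuter_eq_one_iff.2 (Or.inl hs)),
      fun h0 => ⟨rfl, fun h1 => hy fun hs => h1 ((assocInner_eq_one_iff h0).2 (Or.inl hs)),
        fun h => hz fun ht => h (assocInner_eq_zero_iff.2 ht)⟩⟩

variable [TopologicalSpace X] [TopologicalSpace Y] [TopologicalSpace Z]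

theorem continuous_leftAssocMk : Continuous (leftAssocMk : _ → TopJoin (TopJoin X Y) Z) :=
  continuous_mk.comp (continuous_mk.prodMap continuous_id)

theorem continuous_rightAssocMk [CompactSpace Y] [CompactSpace Z] :
    Continuous (rightAssocMk : _ → TopJoin X (TopJoin Y Z)) := by
  refine continuous_iff_continuousAt.2 fun p => ?_
  have hout : Continuous fun p : (X × Y × I) × Z × I => assocOuter p.1.2.2 p.2.2 := by fun_prop
  by_cases h0 : assocOuter p.1.2.2 p.2.2 = 0
  · exact continuousAt_mk_of_eq_zero (by fun_prop) hout.continuousAt h0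
  have hin : ContinuousAt (fun p : (X × Y × I) × Z × I => assocInner p.1.2.2 p.2.2) p :=
    IsInducing.subtypeVal.continuousAt_iff.2 <| ContinuousAt.div (by fun_prop)
      (continuous_subtype_val.comp hout).continuousAt (coe_ne_zero.2 h0)
  unfold rightAssocMk
  fun_prop

end Assoc

end TopJoin

/-- The join is associative up to homeomorphism for compact Hausdorff spaces. -/
theorem topJoin_assoc (X Y Z : Type) [TopologicalSpace X] [TopologicalSpace Y]
    [TopologicalSpace Z] [CompactSpace X] [T2Space X] [CompactSpace Y] [T2Space Y]
    [CompactSpace Z] [T2Space Z] :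
    Nonempty (TopJoin (TopJoin X Y) Z ≃ₜ TopJoin X (TopJoin Y Z)) :=
  IsQuotientMap.nonempty_homeomorph_of_ker_eq
    (.of_surjective_continuous TopJoin.leftAssocMk_surjective TopJoin.continuous_leftAssocMk)
    (.of_surjective_continuous TopJoin.rightAssocMk_surjective TopJoin.continuous_rightAssocMk)
    (Setoid.ext fun _ _ => TopJoin.rightAssocMk_eq_iff.symm)
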